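/- Let N = \mathbb{Z}^2 + \mathbb{Z}\cdot(\tfrac13,\tfrac13) \subset \mathbb{Q}^2, and let H be the \mathbb{Q}-algebra that is free as a \mathbb{Q}-module on basis \{y_b : b \in N\}, with bilinear multiplication y_b \cdot y_{b'} = y_{b+b'} if b and b' lie in a common one of the three closed cones C_{12} = \mathrm{cone}((1,0),(0,1)), C_{23} = \mathrm{cone}((0,1),(-1,-1)), C_{13} = \mathrm{cone}((-1,-1),(1,0)) of \mathbb{Q}^2, and y_b \cdot y_{b'} = 0 otherwise. Set u_1 = y_{(1,0)}, u_2 = y_{(0,1)}, u_3 = y_{(-1/3,-1/3)}. Let I be the formal series in H((z^{-1}))[[Q, x_0, x_1, t_1, t_2, t_3]] given by I = z \exp((u_1 t_1 + u_2 t_2 + u_3 t_3)/z) \sum_{(l,k_0,k_1) \in \mathbb{N}^3} \frac{Q^l x_0^{k_0} x_1^{k_1} e^{(t_1+t_2+3t_3)l}}{z^{k_0+k_1} k_0! k_1!}\, F(l,k_1)\, \prod_{b=1}^{l}(u_3+bz)^{-1}\, y_{c(l,k_1)}, where F(l,k_1) = \prod_{(l-k_1)/3 < b \le 0} (u_1+bz)(u_2+bz)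 if l \le k_1 and F(l,k_1) = \prod_{0 < b \le (l-k_1)/3} \big((u_1+bz)(u_2+bz)\big)^{-1} if l \ge k_1, the products over b running over rationals with b - (l-k_1)/3 \in \mathbb{Z}, and c(l,k_1) = \langle (k_1-l)/3 \rangle \cdot (1,1) \in N with \langle \cdot \rangle the fractional part. Then the coefficient of z^k in I vanishes for every k \ge 2, the coefficient of z^1 equals 1 = y_{(0,0)}, and the coefficient of z^0 equals t_1 u_1 + t_2 u_2 + t_3 u_3 + x_0 + x_1 y_{(1/3,1/3)}. -/

import Mathlib

open Finset

noncomputable section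

/-- The lattice `N = ℤ² + ℤ·(1/3,1/3) ⊂ ℚ²`, i.e. the subgroup of `ℚ²` generated by
`(1,0)`, `(0,1)` and `(1/3,1/3)`. -/
def NL : AddSubgroup (ℚ × ℚ) :=
  AddSubgroup.closure {((1 : ℚ), (0 : ℚ)), ((0 : ℚ), (1 : ℚ)), ((1/3 : ℚ), (1/3 : ℚ))}

lemma mem10 : ((1 : ℚ), (0 : ℚ)) ∈ NL := AddSubgroup.subset_closure (by simp)
lemma mem01 : ((0 : ℚ), (1 : ℚ)) ∈ NL := AddSubgroup.subset_closure (by simp)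
lemma mem13 : ((1/3 : ℚ), (1/3 : ℚ)) ∈ NL := AddSubgroup.subset_closure (by simp)

/-- `(1,0) ∈ N`, indexing `u₁ = y_{(1,0)}`. -/
def b₁ : NL := ⟨((1 : ℚ), (0 : ℚ)), mem10⟩
/-- `(0,1) ∈ N`, indexing `u₂ = y_{(0,1)}`. -/
def b₂ : NL := ⟨((0 : ℚ), (1 : ℚ)), mem01⟩
/-- `(1/3,1/3) ∈ N`, indexing the twisted-sector unit `y_{(1/3,1/3)}`. -/
def bT : NL := ⟨((1/3 : ℚ), (1/3 : ℚ)), mem13⟩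
/-- `(-1/3,-1/3) ∈ N`, indexing `u₃ = y_{(-1/3,-1/3)}`. -/
def b₃ : NL := -bT

/-- The closed cone spanned by `v` and `w` in `ℚ²`. -/
def cone2 (v w : ℚ × ℚ) : Set (ℚ × ℚ) :=
  {p | ∃ a c : ℚ, 0 ≤ a ∧ 0 ≤ c ∧ p = a • v + c • w}

/-- The three maximal cones `C₁₂ = cone((1,0),(0,1))`, `C₂₃ = cone((0,1),(-1,-1))`,
`C₁₃ = cone((-1,-1),(1,0))` of the fan of `ℙ(1,1,3)`. -/
def cones : Set (Set (ℚ × ℚ)) :=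
  {cone2 ((1 : ℚ), (0 : ℚ)) ((0 : ℚ), (1 : ℚ)),
    cone2 ((0 : ℚ), (1 : ℚ)) ((-1 : ℚ), (-1 : ℚ)),
    cone2 ((-1 : ℚ), (-1 : ℚ)) ((1 : ℚ), (0 : ℚ))}

/-- The box element `c(l,k₁) = ⟨(k₁-l)/3⟩·(1,1) = ((k₁-l) mod 3) • (1/3,1/3) ∈ N`. -/
def cElt (l k₁ : ℕ) : NL := (((k₁ : ℤ) - (l : ℤ)) % 3) • bT

variable (H : Type*) [CommRing H] [Algebra ℚ H]

/-- The element `z` of `H((z⁻¹)) = LaurentSeries H` (Laurent series in `w = z⁻¹`,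
so `z = w⁻¹` is the single series with exponent `-1`). -/
def zz : LaurentSeries H := HahnSeries.single (-1 : ℤ) 1

/-- The element `z⁻¹` of `H((z⁻¹))`. -/
def zinv : LaurentSeries H := HahnSeries.single (1 : ℤ) 1

/-- `F(l,k₁)`: if `l ≤ k₁` it is `∏_b (u₁+bz)(u₂+bz)`, the product over rationals `b`
with `(l-k₁)/3 < b ≤ 0` and `b - (l-k₁)/3 ∈ ℤ` (i.e. `b = (l-k₁)/3 + j`,
`j = 1, …, ⌊(k₁-l)/3⌋`); if `l ≥ k₁` it is `∏_b ((u₁+bz)(u₂+bz))⁻¹`, the product over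
rationals `b` with `0 < b ≤ (l-k₁)/3` and `b - (l-k₁)/3 ∈ ℤ` (i.e. `b = (l-k₁)/3 - j`,
`j = 0, …, ⌈(l-k₁)/3⌉ - 1`). -/
def Ffac (y : NL → H) (l k : ℕ) : LaurentSeries H :=
  if l ≤ k then
    ∏ j ∈ Finset.range ((k - l) / 3),
      ((HahnSeries.C (y b₁) + ((((l : ℚ) - (k : ℚ)) / 3) + ((j : ℚ) + 1)) • zz H) *
        (HahnSeries.C (y b₂) + ((((l : ℚ) - (k : ℚ)) / 3) + ((j : ℚ) + 1)) • zz H))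
  else
    ∏ j ∈ Finset.range ((l - k + 2) / 3),
      Ring.inverse
        ((HahnSeries.C (y b₁) + ((((l : ℚ) - (k : ℚ)) / 3) - (j : ℚ)) • zz H) *
          (HahnSeries.C (y b₂) + ((((l : ℚ) - (k : ℚ)) / 3) - (j : ℚ)) • zz H))

/-- The `S`-extended `I`-function of `ℙ(1,1,3)` as an element of
`H((z⁻¹))[[Q, x₀, x₁, t₁, t₂, t₃]]` (variables `0 ↦ Q`, `1 ↦ x₀`, `2 ↦ x₁`, `3 ↦ t₁`,
`4 ↦ t₂`, `5 ↦ t₃`), given by its coefficients: the coefficient of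
`Q^l x₀^{k₀} x₁^{k₁} t₁^{a₁} t₂^{a₂} t₃^{a₃}` in
`z exp((u₁t₁+u₂t₂+u₃t₃)/z) ∑_{(l,k₀,k₁)} Q^l x₀^{k₀} x₁^{k₁} e^{(t₁+t₂+3t₃)l}
  /(z^{k₀+k₁}k₀!k₁!) F(l,k₁) (∏_{b=1}^{l}(u₃+bz)⁻¹) y_{c(l,k₁)}`,
namely `z (u₁/z + l)^{a₁}(u₂/z + l)^{a₂}(u₃/z + 3l)^{a₃}/(a₁!a₂!a₃! z^{k₀+k₁} k₀!k₁!)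
F(l,k₁) (∏_{b=1}^l (u₃+bz)⁻¹) y_{c(l,k₁)}`, where `u₁ = y_{(1,0)}`, `u₂ = y_{(0,1)}`,
`u₃ = y_{(-1/3,-1/3)}`. -/
def Ifun (y : NL → H) : MvPowerSeries (Fin 6) (LaurentSeries H) := fun m =>
  let l := m 0; let k₀ := m 1; let k₁ := m 2; let a₁ := m 3; let a₂ := m 4; let a₃ := m 5
  (algebraMap ℚ (LaurentSeries H)
      (((k₀.factorial * k₁.factorial *
          a₁.factorial * a₂.factorial * a₃.factorial : ℕ) : ℚ)⁻¹)) *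
    zz H * zinv H ^ (k₀ + k₁) *
    ((HahnSeries.C (y b₁) : LaurentSeries H) * zinv H + (l : LaurentSeries H)) ^ a₁ *
    ((HahnSeries.C (y b₂) : LaurentSeries H) * zinv H + (l : LaurentSeries H)) ^ a₂ *
    ((HahnSeries.C (y b₃) : LaurentSeries H) * zinv H + ((3 * l : ℕ) : LaurentSeries H)) ^ a₃ *
    Ffac H y l k₁ *
    (∏ j ∈ Finset.range l, Ring.inverse ((HahnSeries.C (y b₃) : LaurentSeries H) + ((j : ℚ) + 1) • zz H)) *
    (HahnSeries.C (y (cElt l k₁)) : LaurentSeries H)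

/-- The coefficient of `z^k` in a series in `H((z⁻¹))[[Q,x,t]]`, as an element of
`H[[Q,x,t]]`. -/
def zCoeff (I : MvPowerSeries (Fin 6) (LaurentSeries H)) (k : ℤ) :
    MvPowerSeries (Fin 6) H := fun m =>
  (MvPowerSeries.coeff m I).coeff (-k)

/-!
Write `w = z⁻¹`, so that `H((z⁻¹))` is the ring of Laurent series in `w` and the coefficient of
`z^k` is the coefficient of `w^(-k)`. Each factor of the coefficient of
`Q^l x₀^k₀ x₁^k₁ t₁^a₁ t₂^a₂ t₃^a₃` in `I` has a lower bound on its `w`-order: `z` has order `-1`,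
`u/z` order `1`, and `u + bz` with `b ≠ 0` is `z` times a unit power series in `w`, so its
inverse has order `≥ 1`. Every factor of `F(l,k₁)` has order `≥ -2`, except that the one with
`b = 0` (namely `u₁u₂`) has order `≥ 0`. Adding up, the coefficient has order
`≥ min 2 (2l + k₀ + k₁ + a₁ + a₂ + a₃) - 1`, so only the monomials `1, x₀, x₁, t₁, t₂, t₃` reach
`z¹` or `z⁰`, and those are computed directly. Finally `y₀ = 1`: every `b` shares a cone with
`0`, so `y₀` is a right unit for the spanning family `y`.
-/

theorem Finsupp.eq_zero_or_exists_eq_single_of_degree_le_one {σ : Type*} {m : σ →₀ ℕ}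
    (h : m.degree ≤ 1) : m = 0 ∨ ∃ i, m = Finsupp.single i 1 := by
  rcases Nat.le_one_iff_eq_zero_or_eq_one.1 h with h0 | h1
  · exact .inl ((Finsupp.degree_eq_zero_iff m).1 h0)
  · have hm : m ∈ {d : σ →₀ ℕ | d.degree = 1} := h1
    rw [← Finsupp.range_single_one] at hm
    obtain ⟨i, rfl⟩ := hm
    exact .inr ⟨i, rfl⟩

theorem eq_one_of_span_eq_top_of_mul_eq_self {R A ι : Type*} [CommSemiring R] [Semiring A]
    [Algebra R A] {v : ι → A} (hspan : Submodule.span R (Set.range v) = ⊤) {e : A}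
    (he : ∀ i, v i * e = v i) : e = 1 := by
  have hx (x : A) : x * e = x := by
    have hx : x ∈ Submodule.span R (Set.range v) := hspan ▸ Submodule.mem_top
    induction hx using Submodule.span_induction with
    | mem x hx => obtain ⟨i, rfl⟩ := hx; exact he i
    | zero => exact zero_mul e
    | add a b _ _ ha hb => rw [add_mul, ha, hb]
    | smul r a _ ha => rw [smul_mul_assoc, ha]
  simpa using hx 1

namespace HahnSeries

theorem le_orderTop_add {Γ R : Type*} [LinearOrder Γ] [AddMonoid R] {x y : HahnSeries Γ R}
    {a : WithTop Γ} (hx : a ≤ x.orderTop) (hy : a ≤ y.orderTop) : a ≤ (x + y).orderTop :=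
  (le_min hx hy).trans min_orderTop_le_orderTop_add

variable {Γ R : Type*} [AddCommMonoid Γ] [LinearOrder Γ] [IsOrderedCancelAddMonoid Γ]

theorem coe_add_le_orderTop_mul [Semiring R] {x y : HahnSeries Γ R} {a b : Γ}
    (hx : (a : WithTop Γ) ≤ x.orderTop) (hy : (b : WithTop Γ) ≤ y.orderTop) :
    ((a + b : Γ) : WithTop Γ) ≤ (x * y).orderTop :=
  (WithTop.coe_add a b ▸ add_le_add hx hy).trans orderTop_add_le_mul

theorem coe_nsmul_le_orderTop_prod [CommSemiring R] {ι : Type*} (s : Finset ι)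
    {f : ι → HahnSeries Γ R} {a : Γ} (h : ∀ i ∈ s, (a : WithTop Γ) ≤ (f i).orderTop) :
    ((#s • a : Γ) : WithTop Γ) ≤ (∏ i ∈ s, f i).orderTop := by
  induction s using Finset.cons_induction with
  | empty => simpa using orderTop_single_le (a := (0 : Γ)) (r := (1 : R))
  | cons i s _ ih =>
    rw [prod_cons, card_cons, succ_nsmul']
    exact coe_add_le_orderTop_mul (h i (mem_cons_self i s))
      (ih fun j hj => h j (mem_cons_of_mem hj))

theorem coe_nsmul_le_orderTop_pow [Semiring R] {x : HahnSeries Γ R} {a : Γ}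
    (h : (a : WithTop Γ) ≤ x.orderTop) (n : ℕ) : ((n • a : Γ) : WithTop Γ) ≤ (x ^ n).orderTop :=
  (WithTop.coe_nsmul a n ▸ nsmul_le_nsmul_right h n).trans orderTop_nsmul_le_orderTop_pow

end HahnSeries

theorem Ring.inverse_eq_of_mul_eq_one {M₀ : Type*} [CommMonoidWithZero M₀] {a b : M₀}
    (h : a * b = 1) : Ring.inverse a = b :=
  Ring.inverse_unit (Units.mkOfMulEqOne a b h)

section
open HahnSeries

variable {R : Type*} [CommRing R]

theorem coeff_zCoeff (I : MvPowerSeries (Fin 6) (LaurentSeries R)) (k : ℤ) (m : Fin 6 →₀ ℕ) :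
    MvPowerSeries.coeff m (zCoeff R I k) = (MvPowerSeries.coeff m I).coeff (-k) :=
  rfl

theorem zz_mul_zinv : zz R * zinv R = 1 := by
  simp [zz, zinv, single_mul_single]

theorem neg_one_le_orderTop_zz : ((-1 : ℤ) : WithTop ℤ) ≤ (zz R).orderTop := orderTop_single_le

theorem one_le_orderTop_zinv : ((1 : ℤ) : WithTop ℤ) ≤ (zinv R).orderTop := orderTop_single_le

theorem zero_le_orderTop_C (r : R) : ((0 : ℤ) : WithTop ℤ) ≤ (C r : LaurentSeries R).orderTop := by
  rw [C_apply]; exact orderTop_single_le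

theorem zero_le_orderTop_ofPowerSeries (φ : PowerSeries R) :
    ((0 : ℤ) : WithTop ℤ) ≤ (ofPowerSeries ℤ R φ).orderTop := by
  refine le_orderTop_iff_forall.2 fun j hj => ?_
  rw [PowerSeries.coeff_coe, if_pos (by exact_mod_cast hj)]

theorem le_orderTop_pow_C_mul_zinv_add_natCast (u : R) (n a : ℕ) :
    (((if n = 0 then a else 0 : ℕ) : ℤ) : WithTop ℤ) ≤
      ((C u * zinv R + (n : LaurentSeries R)) ^ a).orderTop := by
  have hCz : ((1 : ℤ) : WithTop ℤ) ≤ (C u * zinv R).orderTop := by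
    simpa using coe_add_le_orderTop_mul (zero_le_orderTop_C u) one_le_orderTop_zinv
  have hx : (((if n = 0 then 1 else 0 : ℕ) : ℤ) : WithTop ℤ) ≤
      (C u * zinv R + (n : LaurentSeries R)).orderTop := by
    split_ifs with hn
    · simpa [hn] using hCz
    · rw [← map_natCast (C : R →+* LaurentSeries R)]
      exact le_orderTop_add ((WithTop.coe_le_coe.2 zero_le_one).trans hCz) (zero_le_orderTop_C _)
  simpa [apply_ite] using coe_nsmul_le_orderTop_pow hx a

variable [Algebra ℚ R]

theorem neg_one_le_orderTop_C_add_smul_zz (u : R) (b : ℚ) :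
    ((-1 : ℤ) : WithTop ℤ) ≤ (C u + b • zz R).orderTop :=
  le_orderTop_add ((WithTop.coe_le_coe.2 (by norm_num)).trans (zero_le_orderTop_C u))
    (neg_one_le_orderTop_zz.trans (orderTop_le_orderTop_smul b _))

theorem C_add_smul_zz_mul_zinv (u : R) (b : ℚ) :
    (C u + b • zz R) * zinv R =
      ofPowerSeries ℤ R (PowerSeries.C (algebraMap ℚ R b) + PowerSeries.C u * PowerSeries.X) := by
  rw [add_mul, smul_mul_assoc, zz_mul_zinv, map_add, map_mul, ofPowerSeries_C, ofPowerSeries_C,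
    ofPowerSeries_X, zinv, add_comm]
  ext n
  simp [← single_zero_one, Algebra.algebraMap_eq_smul_one, coeff_single]

theorem one_le_orderTop_inverse_C_add_smul_zz (u : R) {b : ℚ} (hb : b ≠ 0) :
    ((1 : ℤ) : WithTop ℤ) ≤ (Ring.inverse (C u + b • zz R)).orderTop := by
  set φ := PowerSeries.C (algebraMap ℚ R b) + PowerSeries.C u * PowerSeries.X
  have hφ : IsUnit φ := PowerSeries.isUnit_iff_constantCoeff.2 (by
    simpa [φ] using (Units.mk0 b hb).isUnit.map (algebraMap ℚ R))
  obtain ⟨ψ, hψ⟩ := hφ.exists_right_inv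
  have hinv : (C u + b • zz R) * (zinv R * ofPowerSeries ℤ R ψ) = 1 := by
    rw [← mul_assoc, C_add_smul_zz_mul_zinv, ← map_mul, hψ, map_one]
  rw [Ring.inverse_eq_of_mul_eq_one hinv, ← add_zero (1 : ℤ)]
  exact coe_add_le_orderTop_mul one_le_orderTop_zinv (zero_le_orderTop_ofPowerSeries ψ)

theorem neg_two_le_orderTop_mul_C_add_smul_zz (u v : R) (b : ℚ) :
    ((-2 : ℤ) : WithTop ℤ) ≤ ((C u + b • zz R) * (C v + b • zz R)).orderTop :=
  coe_add_le_orderTop_mul (neg_one_le_orderTop_C_add_smul_zz u b)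
    (neg_one_le_orderTop_C_add_smul_zz v b)

theorem two_le_orderTop_inverse_mul_C_add_smul_zz (u v : R) {b : ℚ} (hb : b ≠ 0) :
    ((2 : ℤ) : WithTop ℤ) ≤ (Ring.inverse ((C u + b • zz R) * (C v + b • zz R))).orderTop := by
  rw [Ring.mul_inverse_rev]
  exact coe_add_le_orderTop_mul (one_le_orderTop_inverse_C_add_smul_zz v hb)
    (one_le_orderTop_inverse_C_add_smul_zz u hb)

end

theorem zero_mem_cone2 (v w : ℚ × ℚ) : (0 : ℚ × ℚ) ∈ cone2 v w :=
  ⟨0, 0, le_rfl, le_rfl, by simp⟩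

theorem exists_mem_cones_zero_mem (p : ℚ × ℚ) : ∃ σ ∈ cones, (0 : ℚ × ℚ) ∈ σ ∧ p ∈ σ := by
  obtain ⟨a, c⟩ := p
  rcases le_total a c with hac | hca
  · by_cases ha : 0 ≤ a
    · exact ⟨_, .inl rfl, zero_mem_cone2 _ _, a, c, ha, by linarith, by ext <;> simp⟩
    · exact ⟨_, .inr (.inl rfl), zero_mem_cone2 _ _, c - a, -a, by linarith, by linarith,
        by ext <;> simp⟩
  · by_cases hc : 0 ≤ c
    · exact ⟨_, .inl rfl, zero_mem_cone2 _ _, a, c, by linarith, hc, by ext <;> simp⟩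
    · exact ⟨_, .inr (.inr rfl), zero_mem_cone2 _ _, -c, a - c, by linarith, by linarith,
        by ext <;> simp⟩

theorem y_zero_eq_one {H : Type*} [CommRing H] [Algebra ℚ H] {y : NL → H}
    (hspan : Submodule.span ℚ (Set.range y) = ⊤)
    (hmul : ∀ b b' : NL, (∃ σ ∈ cones, (b : ℚ × ℚ) ∈ σ ∧ (b' : ℚ × ℚ) ∈ σ) →
      y b * y b' = y (b + b')) : y 0 = 1 :=
  eq_one_of_span_eq_top_of_mul_eq_self hspan fun b => by
    obtain ⟨σ, hσ, h0, hb⟩ := exists_mem_cones_zero_mem b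
    rw [hmul b 0 ⟨σ, hσ, hb, h0⟩, add_zero]

section
open HahnSeries

variable {H}

theorem le_orderTop_Ffac_of_le (y : NL → H) {l k : ℕ} (h : l ≤ k) :
    ((-2 * ((k - l + 2) / 3 - 1 : ℕ) : ℤ) : WithTop ℤ) ≤ (Ffac H y l k).orderTop := by
  rw [Ffac, if_pos h]
  have hprod (n : ℕ) := coe_nsmul_le_orderTop_prod (range n) fun (j : ℕ) _ =>
    neg_two_le_orderTop_mul_C_add_smul_zz (y b₁) (y b₂) (((l : ℚ) - k) / 3 + ((j : ℚ) + 1))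
  simp only [card_range, nsmul_eq_mul] at hprod
  -- when `3 ∣ k - l`, the last factor has `b = 0`: it is `u₁ u₂`, of order `≥ 0`
  by_cases hlast : 3 ∣ k - l ∧ l < k
  · obtain ⟨n, hn⟩ : ∃ n, (k - l) / 3 = n + 1 := ⟨(k - l) / 3 - 1, by omega⟩
    have hk : (k : ℚ) = l + 3 * (n + 1) := by exact_mod_cast (by omega : k = l + 3 * (n + 1))
    have hzero : ((l : ℚ) - k) / 3 + ((n : ℚ) + 1) = 0 := by rw [hk]; ring
    rw [hn, prod_range_succ, hzero, zero_smul, add_zero, add_zero]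
    refine le_trans (WithTop.coe_le_coe.2 ?_) (coe_add_le_orderTop_mul (hprod n)
      (coe_add_le_orderTop_mul (zero_le_orderTop_C (y b₁)) (zero_le_orderTop_C (y b₂))))
    omega
  · exact le_trans (WithTop.coe_le_coe.2 (by omega)) (hprod _)

theorem le_orderTop_Ffac_of_lt (y : NL → H) {l k : ℕ} (h : k < l) :
    ((2 * ((l - k + 2) / 3 : ℕ) : ℤ) : WithTop ℤ) ≤ (Ffac H y l k).orderTop := by
  rw [Ffac, if_neg h.not_ge]
  refine le_trans (WithTop.coe_le_coe.2 (by simp [mul_comm]))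
    (coe_nsmul_le_orderTop_prod _ fun j hj =>
      two_le_orderTop_inverse_mul_C_add_smul_zz (y b₁) (y b₂) ?_)
  have hj : 3 * j < l - k := by rw [mem_range] at hj; omega
  have hl : (l : ℚ) = k + (l - k : ℕ) := by rw [Nat.cast_sub h.le]; ring
  have hj' : (3 * j : ℚ) < (l - k : ℕ) := by exact_mod_cast hj
  rw [hl]; intro h0; linarith

theorem le_orderTop_Ffac (y : NL → H) (l k : ℕ) :
    ((if l ≤ k then -2 * ((k - l + 2) / 3 - 1 : ℕ) else 2 * ((l - k + 2) / 3 : ℕ) : ℤ) :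
      WithTop ℤ) ≤ (Ffac H y l k).orderTop := by
  split_ifs with h
  · exact le_orderTop_Ffac_of_le y h
  · exact le_orderTop_Ffac_of_lt y (not_le.1 h)

theorem le_orderTop_coeff_Ifun (y : NL → H) (m : Fin 6 →₀ ℕ) :
    ((min 2 (m.degree + m 0 : ℕ) - 1 : ℤ) : WithTop ℤ) ≤
      (MvPowerSeries.coeff m (Ifun H y)).orderTop := by
  have hq (q : ℚ) : ((0 : ℤ) : WithTop ℤ) ≤ (algebraMap ℚ (LaurentSeries H) q).orderTop := by
    rw [algebraMap_apply']; exact zero_le_orderTop_ofPowerSeries _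
  have hzinv := coe_nsmul_le_orderTop_pow (one_le_orderTop_zinv (R := H)) (m 1 + m 2)
  have hprod := coe_nsmul_le_orderTop_prod (range (m 0)) fun (j : ℕ) _ =>
    one_le_orderTop_inverse_C_add_smul_zz (y b₃) (b := (j : ℚ) + 1) (by positivity)
  simp only [card_range, nsmul_eq_mul, mul_one] at hzinv hprod
  rw [MvPowerSeries.coeff_apply]
  refine le_trans ?_ <| coe_add_le_orderTop_mul (coe_add_le_orderTop_mul
    (coe_add_le_orderTop_mul (coe_add_le_orderTop_mul
    (coe_add_le_orderTop_mul (coe_add_le_orderTop_mul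
    (coe_add_le_orderTop_mul (coe_add_le_orderTop_mul (hq _)
      neg_one_le_orderTop_zz) hzinv)
    (le_orderTop_pow_C_mul_zinv_add_natCast (y b₁) (m 0) (m 3)))
    (le_orderTop_pow_C_mul_zinv_add_natCast (y b₂) (m 0) (m 4)))
    (le_orderTop_pow_C_mul_zinv_add_natCast (y b₃) (3 * m 0) (m 5)))
    (le_orderTop_Ffac y (m 0) (m 2))) hprod) (zero_le_orderTop_C _)
  rw [WithTop.coe_le_coe, Finsupp.degree_eq_sum, Fin.sum_univ_six]
  split_ifs <;> omega

theorem coeff_coeff_Ifun_eq_zero (y : NL → H) {m : Fin 6 →₀ ℕ} {n : ℤ}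
    (h : n < min 2 (m.degree + m 0 : ℕ) - 1) : (MvPowerSeries.coeff m (Ifun H y)).coeff n = 0 :=
  coeff_eq_zero_of_lt_orderTop
    ((WithTop.coe_lt_coe.2 h).trans_le (le_orderTop_coeff_Ifun y m))

theorem coeff_zero_Ifun (y : NL → H) :
    MvPowerSeries.coeff 0 (Ifun H y) = single (-1) (y 0) := by
  simp [MvPowerSeries.coeff_apply, Ifun, Ffac, cElt, zz]

theorem zCoeff_Ifun_eq_zero (y : NL → H) {k : ℤ} (hk : 2 ≤ k) : zCoeff H (Ifun H y) k = 0 := by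
  ext m
  rw [coeff_zCoeff, map_zero]
  exact coeff_coeff_Ifun_eq_zero y (by omega)

theorem zCoeff_Ifun_one (y : NL → H) (hy : y 0 = 1) : zCoeff H (Ifun H y) 1 = 1 := by
  ext m
  rw [coeff_zCoeff, MvPowerSeries.coeff_one]
  split_ifs with hm
  · rw [hm, coeff_zero_Ifun, coeff_single_same, hy]
  · have := (Finsupp.degree_eq_zero_iff m).not.2 hm
    exact coeff_coeff_Ifun_eq_zero y (by omega)

theorem zCoeff_Ifun_zero (y : NL → H) (hy : y 0 = 1) :
    zCoeff H (Ifun H y) 0 =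
      MvPowerSeries.X 3 * MvPowerSeries.C (y b₁) + MvPowerSeries.X 4 * MvPowerSeries.C (y b₂) +
        MvPowerSeries.X 5 * MvPowerSeries.C (y b₃) + MvPowerSeries.X 1 +
        MvPowerSeries.X 2 * MvPowerSeries.C (y bT) := by
  ext m
  rw [coeff_zCoeff, neg_zero]
  obtain hm | hm := le_or_gt 2 (m.degree + m 0)
  · have hne (i : Fin 6) (hi : i ≠ 0) : m ≠ Finsupp.single i 1 := by
      rintro rfl
      rw [Finsupp.degree_single, Finsupp.single_eq_of_ne hi.symm] at hm
      omega
    rw [coeff_coeff_Ifun_eq_zero y (by omega)]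
    simp [MvPowerSeries.coeff_X, hne]
  · obtain rfl | ⟨i, rfl⟩ :=
      Finsupp.eq_zero_or_exists_eq_single_of_degree_le_one (m := m) (by omega)
    · simp [coeff_zero_Ifun]
    · simp only [map_add, MvPowerSeries.coeff_mul_C, MvPowerSeries.coeff_X]
      fin_cases i <;>
        simp [MvPowerSeries.coeff_apply, Ifun, Ffac, cElt, zz, zinv,
          single_mul_single, Finsupp.single_left_inj, hy] at hm ⊢

end

theorem statement14 (y : NL → H)
    (hspan : Submodule.span ℚ (Set.range y) = ⊤)
    (hmul : ∀ b b' : NL, (∃ σ ∈ cones, (b : ℚ × ℚ) ∈ σ ∧ (b' : ℚ × ℚ) ∈ σ) →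
      y b * y b' = y (b + b')) :
    (∀ k : ℤ, 2 ≤ k → zCoeff H (Ifun H y) k = 0) ∧
    zCoeff H (Ifun H y) 1 = 1 ∧ (1 : H) = y 0 ∧
    zCoeff H (Ifun H y) 0 =
      MvPowerSeries.X 3 * MvPowerSeries.C (y b₁) +
        MvPowerSeries.X 4 * MvPowerSeries.C (y b₂) +
        MvPowerSeries.X 5 * MvPowerSeries.C (y b₃) +
        MvPowerSeries.X 1 +
        MvPowerSeries.X 2 * MvPowerSeries.C (y bT) := by
  have hy : y 0 = 1 := y_zero_eq_one hspan hmul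
  exact ⟨fun k hk => zCoeff_Ifun_eq_zero y hk, zCoeff_Ifun_one y hy, hy.symm,
    zCoeff_Ifun_zero y hy⟩
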